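/- Under the shared-Bernoulli coupling of Greedy and OPT with geometric usage durations, define τ_i(t) = max{ t' < t : A_{t'} = i, or t' = 0 }, the last time before t that Greedy matched resource i. If t ≠ s are two times such that both events {A*_t = i and i ∉ I_t} and {A*_s = i and i ∉ I_s} occur (on the same sample path), then τ_i(t) ≠ τ_i(s). -/

import Mathlib

open Finset

/-- An online policy for the online matching problem with reusable resources,
with `N` resources, `T` requests, and neighborhoods `Nbr`.  Upon arrival of
request `t`, the policy observes the time `t`, the set of currently available
resources, and the history of previously observed availability sets, and
matches the request to at most one available resource adjacent to `t`
(`none` means no match). -/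
structure Policy (N T : ℕ) (Nbr : Fin T → Finset (Fin N)) where
  act : Fin T → Finset (Fin N) → List (Finset (Fin N)) → Option (Fin N)
  feasible : ∀ t I hist i, act t I hist = some i → i ∈ I ∩ Nbr t

/-- Sample space of the shared-Bernoulli coupling for geometric usage
durations: `ω i t` is the return flag `P_{it} ~ Bernoulli (p i)`.  A resource
`i` that is unavailable returns at the start of time `t` iff `ω i t = true`;
this makes the usage duration of every match of `i` distributed as
`Geometric (p i)` on `{1, 2, ...}`. -/
abbrev Flags (N T : ℕ) := Fin N → Fin T → Bool

/-- One step of the dynamics at time `t`.  The state is the pair consisting of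
the set of resources unavailable at the end of the previous step and the
history of observed availability sets. -/
def step {N T : ℕ} {Nbr : Fin T → Finset (Fin N)} (π : Policy N T Nbr)
    (ω : Flags N T) (s : Finset (Fin N) × List (Finset (Fin N))) (t : Fin T) :
    Finset (Fin N) × List (Finset (Fin N)) :=
  let busy := s.1.filter fun i => ω i t = false
  let I : Finset (Fin N) := Finset.univ \ busy
  match π.act t I s.2 with
  | none => (busy, I :: s.2)
  | some i => (insert i busy, I :: s.2)

/-- The state just before step `n` (resources unavailable at the end of step
`n-1`, together with the observed history). -/
def stateUpTo {N T : ℕ} {Nbr : Fin T → Finset (Fin N)} (π : Policy N T Nbr)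
    (ω : Flags N T) (n : ℕ) : Finset (Fin N) × List (Finset (Fin N)) :=
  ((List.finRange T).take n).foldl (step π ω) (∅, [])

/-- `I_t`: the set of resources available at time `t` under policy `π`. -/
def avail {N T : ℕ} {Nbr : Fin T → Finset (Fin N)} (π : Policy N T Nbr)
    (ω : Flags N T) (t : Fin T) : Finset (Fin N) :=
  Finset.univ \ ((stateUpTo π ω t.val).1.filter fun i => ω i t = false)

/-- `A_t`: the resource matched at time `t` under policy `π` (`none` = no match). -/
def act {N T : ℕ} {Nbr : Fin T → Finset (Fin N)} (π : Policy N T Nbr)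
    (ω : Flags N T) (t : Fin T) : Option (Fin N) :=
  π.act t (avail π ω t) (stateUpTo π ω t.val).2

/-- The total reward collected by policy `π` on the sample path `ω`. -/
def reward {N T : ℕ} {Nbr : Fin T → Finset (Fin N)} (r : Fin N → ℝ)
    (π : Policy N T Nbr) (ω : Flags N T) : ℝ :=
  ∑ t : Fin T, (act π ω t).elim 0 r

/-- Probability of the flag configuration `ω` when `P_{it} ~ Bernoulli (p i)`
independently. -/
noncomputable def weight {N T : ℕ} (p : Fin N → ℝ) (ω : Flags N T) : ℝ :=
  ∏ i : Fin N, ∏ t : Fin T, if ω i t then p i else 1 - p i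

/-- Expectation over the i.i.d. Bernoulli return flags. -/
noncomputable def expect {N T : ℕ} (p : Fin N → ℝ) (f : Flags N T → ℝ) : ℝ :=
  ∑ ω : Flags N T, weight p ω * f ω

/-- The greedy policy: match the available neighboring resource of largest
index (equivalently, of highest reward, since rewards are sorted). -/
def greedy (N T : ℕ) (Nbr : Fin T → Finset (Fin N)) : Policy N T Nbr where
  act := fun t I _ => if h : (I ∩ Nbr t).Nonempty then some ((I ∩ Nbr t).max' h) else none
  feasible := by
    intro t I hist i hi
    try simp only at hi
    by_cases h : (I ∩ Nbr t).Nonempty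
    · rw [dif_pos h, Option.some.injEq] at hi
      exact hi ▸ Finset.max'_mem _ h
    · rw [dif_neg h] at hi
      exact absurd hi (by simp)

/-- `Greedy(I)`: the expected total reward of the greedy policy. -/
noncomputable def greedyVal (N T : ℕ) (Nbr : Fin T → Finset (Fin N))
    (r : Fin N → ℝ) (p : Fin N → ℝ) : ℝ :=
  expect p (reward r (greedy N T Nbr))

/-- `OPT(I)`: the optimal expected total reward over all (clairvoyant)
policies; such a policy knows the whole instance, including the request
sequence, but observes returns only as they occur. -/
noncomputable def optVal (N T : ℕ) (Nbr : Fin T → Finset (Fin N))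
    (r : Fin N → ℝ) (p : Fin N → ℝ) : ℝ :=
  ⨆ π : Policy N T Nbr, expect p (reward r π)

/-- `τ_i(t)`: the last time `t' < t` at which Greedy matched resource `i`
(`⊥` plays the role of the convention `t' = 0`, i.e. no such time). -/
def tau {N T : ℕ} (Nbr : Fin T → Finset (Fin N)) (ω : Flags N T)
    (i : Fin N) (t : Fin T) : WithBot (Fin T) :=
  (Finset.univ.filter fun s : Fin T =>
      s < t ∧ act (greedy N T Nbr) ω s = some i).max

/-!
If `τ_i(t) = τ_i(s)` with `t < s`, Greedy never matches `i` on `[t, s)`, so `i` being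
unavailable to Greedy at `s` forces all return flags of `i` on `[t, s]` to be `false`. On those
same flags, the policy that matched `i` at `t` still holds `i` at `s` and cannot match it again.
-/

variable {N T : ℕ} {Nbr : Fin T → Finset (Fin N)}

section Dynamics

variable (π : Policy N T Nbr) (ω : Flags N T) (i : Fin N)

lemma stateUpTo_succ (u : Fin T) :
    stateUpTo π ω (u.val + 1) = step π ω (stateUpTo π ω u.val) u := by
  rw [stateUpTo, List.take_add_one, List.foldl_append,
    List.getElem?_eq_getElem (by simp), List.getElem_finRange]
  rfl

lemma notMem_avail_iff (u : Fin T) :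
    i ∉ avail π ω u ↔ i ∈ (stateUpTo π ω u.val).1 ∧ ω i u = false := by
  simp [avail]

lemma mem_avail_of_act {u : Fin T} (h : act π ω u = some i) : i ∈ avail π ω u :=
  (mem_inter.1 (π.feasible _ _ _ i h)).1

lemma mem_stateUpTo_succ_iff (u : Fin T) :
    i ∈ (stateUpTo π ω (u.val + 1)).1 ↔ i ∉ avail π ω u ∨ act π ω u = some i := by
  rw [stateUpTo_succ, notMem_avail_iff, act, avail]
  simp only [step]
  split <;> rename_i h <;> rw [h] <;> simp only [mem_filter, mem_insert]
  · simp
  · rw [Option.some.injEq, eq_comm, or_comm]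

lemma notMem_avail_of_act_of_flags_false {t s : Fin T} (ht : act π ω t = some i) (hts : t < s)
    (hflags : ∀ v : Fin T, t < v → v ≤ s → ω i v = false) : i ∉ avail π ω s := by
  obtain ⟨k, hk⟩ : ∃ k, s.val = t.val + 1 + k := ⟨s.val - t.val - 1, by omega⟩
  induction k generalizing s with
  | zero =>
    have hs : s.val = t.val + 1 := hk
    refine (notMem_avail_iff π ω i s).2 ⟨?_, hflags s hts le_rfl⟩
    rw [hs]
    exact (mem_stateUpTo_succ_iff π ω i t).2 (Or.inr ht)
  | succ k ih =>
    let u : Fin T := ⟨t.val + 1 + k, by omega⟩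
    have htu : t < u := Fin.lt_def.2 (by simp [u]; omega)
    have hus : u ≤ s := Fin.le_def.2 (by simp [u]; omega)
    have hu : i ∉ avail π ω u := ih htu (fun v h₁ h₂ => hflags v h₁ (h₂.trans hus)) rfl
    have hsu : s.val = u.val + 1 := by simp [u]; omega
    refine (notMem_avail_iff π ω i s).2 ⟨?_, hflags s hts le_rfl⟩
    rw [hsu]
    exact (mem_stateUpTo_succ_iff π ω i u).2 (Or.inl hu)

lemma notMem_avail_of_unmatched {t s : Fin T} (hs : i ∉ avail π ω s)
    (hunmatched : ∀ v : Fin T, t ≤ v → v < s → act π ω v ≠ some i) :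
    ∀ v : Fin T, t ≤ v → v ≤ s → i ∉ avail π ω v := by
  intro v htv hvs
  obtain ⟨k, hk⟩ : ∃ k, v.val + k = s.val := ⟨s.val - v.val, by rw [Fin.le_def] at hvs; omega⟩
  induction k generalizing v with
  | zero => rwa [Fin.ext (hk : v.val = s.val)]
  | succ k ih =>
    let w : Fin T := ⟨v.val + 1, by omega⟩
    have hw : i ∉ avail π ω w :=
      ih w (htv.trans (Fin.le_def.2 (by simp [w]))) (Fin.le_def.2 (by simp [w]; omega))
        (by simp [w]; omega)
    exact ((mem_stateUpTo_succ_iff π ω i v).1 ((notMem_avail_iff π ω i w).1 hw).1).resolve_right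
      (hunmatched v htv (Fin.lt_def.2 (by omega)))

end Dynamics

lemma tau_lt (ω : Flags N T) (i : Fin N) (t : Fin T) : tau Nbr ω i t < t := by
  unfold tau
  cases h : (univ.filter fun s : Fin T => s < t ∧ act (greedy N T Nbr) ω s = some i).max with
  | bot => exact WithBot.bot_lt_coe t
  | coe b => exact WithBot.coe_lt_coe.2 (mem_filter.1 (mem_of_max h)).2.1

lemma le_tau {ω : Flags N T} {i : Fin N} {t v : Fin T} (hvt : v < t)
    (hv : act (greedy N T Nbr) ω v = some i) : (v : WithBot (Fin T)) ≤ tau Nbr ω i t :=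
  le_max (by simp [hvt, hv])

lemma act_greedy_ne_of_tau_eq {ω : Flags N T} {i : Fin N} {t s v : Fin T}
    (heq : tau Nbr ω i t = tau Nbr ω i s) (htv : t ≤ v) (hvs : v < s) :
    act (greedy N T Nbr) ω v ≠ some i := fun hv =>
  absurd ((le_tau hvs hv).trans_lt (heq ▸ tau_lt ω i t)) (not_lt.2 (WithBot.coe_le_coe.2 htv))

theorem tau_injective_on_lost_matches_general
    (N T : ℕ)
    (Nbr : Fin T → Finset (Fin N))
    (π : Policy N T Nbr) (ω : Flags N T) (i : Fin N) (t s : Fin T)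
    (hts : t ≠ s)
    (ht : act π ω t = some i ∧ i ∉ avail (greedy N T Nbr) ω t)
    (hs : act π ω s = some i ∧ i ∉ avail (greedy N T Nbr) ω s) :
    tau Nbr ω i t ≠ tau Nbr ω i s := by
  wlog hlt : t < s generalizing t s
  · exact (this s t hts.symm hs ht (lt_of_le_of_ne (not_lt.1 hlt) hts.symm)).symm
  intro heq
  have hgreedy := notMem_avail_of_unmatched (greedy N T Nbr) ω i hs.2
    (fun v htv hvs => act_greedy_ne_of_tau_eq heq htv hvs)
  have hflags : ∀ v : Fin T, t < v → v ≤ s → ω i v = false := fun v htv hvs =>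
    ((notMem_avail_iff _ ω i v).1 (hgreedy v htv.le hvs)).2
  exact notMem_avail_of_act_of_flags_false π ω i ht.1 hlt hflags (mem_avail_of_act π ω i hs.1)

/-- **Claim 1 (injectivity of `τ`).**  Under the shared-Bernoulli coupling of
Greedy and any benchmark policy `π` (in particular the optimal clairvoyant
policy `OPT`) with geometric usage durations, if `t ≠ s` are two times such
that, on the same sample path `ω`, both events `{A*_t = i, i ∉ I_t}` and
`{A*_s = i, i ∉ I_s}` occur (`I_t` being Greedy's availability set), then
`τ_i(t) ≠ τ_i(s)`. -/
theorem tau_injective_on_lost_matches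
    (N T : ℕ) (r : Fin N → ℝ) (hr0 : ∀ i, 0 ≤ r i) (hrmono : Monotone r)
    (Nbr : Fin T → Finset (Fin N))
    (pv : Fin N → ℝ) (hpv0 : ∀ i, 0 ≤ pv i) (hpv1 : ∀ i, pv i ≤ 1)
    (π : Policy N T Nbr) (ω : Flags N T) (i : Fin N) (t s : Fin T)
    (hts : t ≠ s)
    (ht : act π ω t = some i ∧ i ∉ avail (greedy N T Nbr) ω t)
    (hs : act π ω s = some i ∧ i ∉ avail (greedy N T Nbr) ω s) :
    tau Nbr ω i t ≠ tau Nbr ω i s :=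
  tau_injective_on_lost_matches_general N T Nbr π ω i t s hts ht hs
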